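/- Let H be an n×n real symmetric matrix whose largest eigenvalue λ₁ is simple (has algebraic multiplicity 1). Then H has exactly k (2 ≤ k ≤ n) distinct eigenvalues if and only if there exist k distinct real numbers λ₁, λ₂, …, λ_k such that: (i) H − λᵢI is singular for each 2 ≤ i ≤ k; and (ii) ∏_{i=2}^{k} (H − λᵢI) = b·y·yᵀ with H·y = λ₁·y, where b is a strictly positive real number and y ∈ ℝⁿ is a nonzero vector. Moreover, in that case λ₁, λ₂, …, λ_k are exactly the k distinct eigenvalues of H. -/

import Mathlib

/-! If `p = ∏_{i ≥ 2} (X - λᵢ)` and `p(H) = b y yᵀ` with `H y = λ₁ y`, then for an eigenvector `v`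
of `H` with eigenvalue `x` the vector `p(x) v = p(H) v` lies on the line through `y`; so either
`p(x) = 0`, i.e. `x = λᵢ` for some `i ≥ 2`, or `v` is an eigenvector for `λ₁` and `x = λ₁`.
Hence the spectrum is exactly `{λ₁, …, λ_k}`.

Conversely, in an orthonormal eigenbasis `(vⱼ)` with eigenvalues `eⱼ` we have
`p(H) = ∑ⱼ p(eⱼ) vⱼ vⱼᵀ`. If the `λᵢ` enumerate the spectrum, `p` vanishes at every `eⱼ ≠ λ₁`,
and `λ₁` occurs for exactly one `j` because it is simple; so `p(H) = p(λ₁) v vᵀ`, where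
`p(λ₁) = ∏ (λ₁ - λᵢ) > 0` because `λ₁` is the largest eigenvalue. -/

open Polynomial Matrix Finset

theorem Set.exists_injective_fin_range_eq_apply_eq {α : Type*} {s : Set α} {k : ℕ}
    (hs : s.ncard = k) {a : α} (ha : a ∈ s) (i₀ : Fin k) :
    ∃ μ : Fin k → α, Function.Injective μ ∧ Set.range μ = s ∧ μ i₀ = a := by
  have : Finite s := (Set.finite_of_ncard_ne_zero (hs ▸ i₀.pos.ne')).to_subtype
  let e : s ≃ Fin k := Finite.equivFinOfCardEq (Nat.card_coe_set_eq s ▸ hs)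
  let σ := Equiv.swap i₀ (e ⟨a, ha⟩)
  refine ⟨Subtype.val ∘ e.symm ∘ σ, ?_, ?_, by simp [σ]⟩
  · exact Subtype.val_injective.comp (e.symm.injective.comp σ.injective)
  · rw [(e.symm.surjective.comp σ.surjective).range_comp, Subtype.range_coe]

theorem Polynomial.eval_prod_X_sub_C_pos {R ι : Type*} [CommRing R] [PartialOrder R]
    [IsStrictOrderedRing R] {s : Finset ι} {μ : ι → R} {x : R}
    (h : ∀ i ∈ s, μ i < x) : 0 < (∏ i ∈ s, (X - C (μ i))).eval x := by
  rw [eval_prod]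
  exact prod_pos fun i hi => by simpa using h i hi

namespace Matrix

section CommRing

variable {R n : Type*} [CommRing R] [Fintype n] [DecidableEq n]

theorem aeval_mulVec_of_mulVec_eq_smul {A : Matrix n n R} {v : n → R} {t : R}
    (hv : A *ᵥ v = t • v) (p : R[X]) : aeval A p *ᵥ v = p.eval t • v := by
  induction p using Polynomial.induction_on' with
  | add p q hp hq => rw [map_add, add_mulVec, hp, hq, eval_add, add_smul]
  | monomial m c =>
    have hpow : (A ^ m) *ᵥ v = t ^ m • v := by
      induction m with
      | zero => simp
      | succ m ih =>
        rw [pow_succ, ← mulVec_mulVec, hv, mulVec_smul, ih, smul_smul, pow_succ, mul_comm]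
    rw [aeval_monomial, Algebra.algebraMap_eq_smul_one, smul_mul_assoc, one_mul, smul_mulVec, hpow,
      eval_monomial, smul_smul]

end CommRing

section Field

variable {K n : Type*} [Field K] [Fintype n] [DecidableEq n]

theorem mem_spectrum_iff_det_sub_smul_one_eq_zero (A : Matrix n n K) (t : K) :
    t ∈ spectrum K A ↔ (A - t • 1).det = 0 := by
  rw [spectrum.mem_iff, Algebra.algebraMap_eq_smul_one, ← neg_sub, IsUnit.neg_iff,
    isUnit_iff_isUnit_det, isUnit_iff_ne_zero, not_not]

theorem mem_spectrum_iff_exists_mulVec_eq_smul (A : Matrix n n K) (t : K) :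
    t ∈ spectrum K A ↔ ∃ v ≠ 0, A *ᵥ v = t • v := by
  simp only [mem_spectrum_iff_det_sub_smul_one_eq_zero, ← exists_mulVec_eq_zero_iff,
    sub_mulVec, smul_mulVec, one_mulVec, sub_eq_zero]

theorem eq_of_mem_spectrum_of_aeval_eq_smul_vecMulVec {A : Matrix n n K} {p : K[X]} {b t x : K}
    {y z : n → K} (hp : aeval A p = b • vecMulVec y z) (hy : A *ᵥ y = t • y)
    (hx : x ∈ spectrum K A) (hpx : p.eval x ≠ 0) : x = t := by
  obtain ⟨v, hv, hAv⟩ := (mem_spectrum_iff_exists_mulVec_eq_smul A x).1 hx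
  have hpv : p.eval x • v = (b * (z ⬝ᵥ v)) • y := by
    rw [← aeval_mulVec_of_mulVec_eq_smul hAv, hp, smul_mulVec, vecMulVec_mulVec, op_smul_eq_smul,
      smul_smul]
  have hzero : (p.eval x * (x - t)) • v = 0 := by
    have hApv := congrArg (A *ᵥ ·) hpv
    simp only [mulVec_smul, hAv, hy] at hApv
    rw [mul_sub, sub_smul, ← smul_smul, hApv, smul_comm, ← hpv, smul_smul, mul_comm, sub_self]
  simpa [hpx, hv, sub_eq_zero] using hzero

theorem spectrum_eq_range_of_aeval_prod_eq_smul_vecMulVec {ι : Type*} [Fintype ι] [DecidableEq ι]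
    {A : Matrix n n K} {μ : ι → K} {i₀ : ι} (hμ : ∀ i ≠ i₀, μ i ∈ spectrum K A) {b : K}
    {y z : n → K} (hy₀ : y ≠ 0) (hy : A *ᵥ y = μ i₀ • y)
    (hp : aeval A (∏ i ∈ univ.erase i₀, (X - C (μ i))) = b • vecMulVec y z) :
    spectrum K A = Set.range μ := by
  ext x
  constructor
  · intro hx
    by_cases h : ∃ i ≠ i₀, μ i = x
    · obtain ⟨i, -, rfl⟩ := h
      exact ⟨i, rfl⟩
    · push Not at h
      refine ⟨i₀, (eq_of_mem_spectrum_of_aeval_eq_smul_vecMulVec hp hy hx ?_).symm⟩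
      simp only [eval_prod, eval_sub, eval_X, eval_C, prod_ne_zero_iff, mem_erase, sub_ne_zero]
      exact fun i ⟨hi, _⟩ => (h i hi).symm
  · rintro ⟨i, rfl⟩
    by_cases hi : i = i₀
    · exact hi ▸ (mem_spectrum_iff_exists_mulVec_eq_smul A _).2 ⟨y, hy₀, hy⟩
    · exact hμ i hi

end Field

namespace IsHermitian

section RCLike

variable {𝕜 n : Type*} [RCLike 𝕜] [Fintype n] [DecidableEq n] {A : Matrix n n 𝕜}

theorem card_eigenvalues_eq_rootMultiplicity (hA : A.IsHermitian) (t : ℝ) :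
    #{j | hA.eigenvalues j = t} = A.charpoly.rootMultiplicity (t : 𝕜) := by
  rw [← count_roots, hA.roots_charpoly_eq_eigenvalues, Multiset.count_map]
  simp [Finset.card, Finset.filter_val, eq_comm]

theorem aeval_eq_sum_smul_vecMulVec (hA : A.IsHermitian) (p : 𝕜[X]) :
    aeval A p = ∑ j, p.eval (hA.eigenvalues j : 𝕜) •
      vecMulVec ⇑(hA.eigenvectorBasis j) (star ⇑(hA.eigenvectorBasis j)) := by
  refine (toLpLin 2 2).injective <| hA.eigenvectorBasis.toBasis.ext fun i => ?_
  simp only [toLpLin_apply, OrthonormalBasis.coe_toBasis]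
  congr 1
  have hv := hA.mulVec_eigenvectorBasis i
  rw [RCLike.real_smul_eq_coe_smul (K := 𝕜)] at hv
  rw [aeval_mulVec_of_mulVec_eq_smul hv, sum_mulVec]
  simp only [smul_mulVec, vecMulVec_mulVec, op_smul_eq_smul, dotProduct_comm (star _),
    ← EuclideanSpace.inner_eq_star_dotProduct, hA.eigenvectorBasis.inner_eq_ite]
  simp

theorem aeval_eq_smul_vecMulVec_of_eval_eq_zero (hA : A.IsHermitian) {p : 𝕜[X]} {j₀ : n}
    (hp : ∀ j ≠ j₀, p.eval (hA.eigenvalues j : 𝕜) = 0) :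
    aeval A p = p.eval (hA.eigenvalues j₀ : 𝕜) •
      vecMulVec ⇑(hA.eigenvectorBasis j₀) (star ⇑(hA.eigenvectorBasis j₀)) := by
  rw [hA.aeval_eq_sum_smul_vecMulVec, sum_eq_single j₀ (fun j _ hj => by rw [hp j hj, zero_smul])
    (by simp)]

end RCLike

theorem exists_aeval_prod_eq_smul_vecMulVec {n ι : Type*} [Fintype n] [DecidableEq n] [Fintype ι]
    [DecidableEq ι] {A : Matrix n n ℝ} (hA : A.IsHermitian) {μ : ι → ℝ}
    (hμ : spectrum ℝ A ⊆ Set.range μ) {i₀ : ι} (hsimple : A.charpoly.rootMultiplicity (μ i₀) = 1) :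
    ∃ y ≠ 0, A *ᵥ y = μ i₀ • y ∧ aeval A (∏ i ∈ univ.erase i₀, (X - C (μ i))) =
      (∏ i ∈ univ.erase i₀, (X - C (μ i))).eval (μ i₀) • vecMulVec y y := by
  obtain ⟨j₀, hj₀⟩ :=
    card_eq_one.1 <| (hA.card_eigenvalues_eq_rootMultiplicity (μ i₀)).trans hsimple
  have hj : ∀ j, hA.eigenvalues j = μ i₀ ↔ j = j₀ := by
    simpa [Finset.ext_iff] using hj₀
  have hμj₀ : hA.eigenvalues j₀ = μ i₀ := (hj j₀).2 rfl
  have hp : ∀ j ≠ j₀, (∏ i ∈ univ.erase i₀, (X - C (μ i))).eval (hA.eigenvalues j) = 0 := by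
    intro j hj₀j
    obtain ⟨i, hi⟩ := hμ (hA.eigenvalues_mem_spectrum_real j)
    have hii₀ : i ≠ i₀ := by rintro rfl; exact hj₀j ((hj j).1 hi.symm)
    rw [eval_prod]
    exact prod_eq_zero (mem_erase.2 ⟨hii₀, mem_univ i⟩) (by simp [hi])
  refine ⟨hA.eigenvectorBasis j₀, by simpa using hA.eigenvectorBasis.orthonormal.ne_zero j₀, ?_, ?_⟩
  · rw [← hμj₀]
    exact hA.mulVec_eigenvectorBasis j₀
  · simpa [hμj₀] using hA.aeval_eq_smul_vecMulVec_of_eval_eq_zero hp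

end IsHermitian

end Matrix

/-- **Corollary.** Let `H` be an `n×n` real symmetric matrix whose largest eigenvalue `λ₁` is
simple. Then `H` has exactly `k` (`2 ≤ k ≤ n`) distinct eigenvalues iff there exist `k` distinct
real numbers `λ₁, …, λ_k` such that (i) `H − λᵢI` is singular for `2 ≤ i ≤ k`, and
(ii) `∏_{i=2}^k (H − λᵢI) = b y yᵀ` with `H y = λ₁ y`, `b > 0` real, `y ∈ ℝⁿ` nonzero.
Moreover, such `λ₁, …, λ_k` are exactly the distinct eigenvalues of `H`. -/
theorem real_symmetric_distinct_eigenvalues_iff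
    (n k : ℕ) (hk2 : 2 ≤ k)
    (H : Matrix (Fin n) (Fin n) ℝ) (hH : H.IsSymm)
    (lam1 : ℝ) (hmem : lam1 ∈ spectrum ℝ H)
    (hmax : ∀ x : ℝ, x ∈ spectrum ℝ H → x ≤ lam1)
    (hsimple : H.charpoly.rootMultiplicity lam1 = 1) :
    ((spectrum ℝ H).ncard = k ↔
      ∃ μ : Fin k → ℝ, Function.Injective μ ∧
        (∀ i : Fin k, i ≠ ⟨0, by omega⟩ → (H - μ i • 1).det = 0) ∧
        ∃ b : ℝ, 0 < b ∧ ∃ y : Fin n → ℝ, y ≠ 0 ∧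
          (Polynomial.aeval H)
              (∏ i ∈ Finset.univ.erase (⟨0, by omega⟩ : Fin k), (X - C (μ i))) =
            b • Matrix.vecMulVec y y ∧
          H.mulVec y = μ ⟨0, by omega⟩ • y) ∧
    (∀ μ : Fin k → ℝ, Function.Injective μ →
      (∀ i : Fin k, i ≠ ⟨0, by omega⟩ → (H - μ i • 1).det = 0) →
      (∃ b : ℝ, 0 < b ∧ ∃ y : Fin n → ℝ, y ≠ 0 ∧
        (Polynomial.aeval H)
            (∏ i ∈ Finset.univ.erase (⟨0, by omega⟩ : Fin k), (X - C (μ i))) =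
          b • Matrix.vecMulVec y y ∧
        H.mulVec y = μ ⟨0, by omega⟩ • y) →
      spectrum ℝ H = Set.range μ) := by
  refine ⟨⟨fun hcard => ?_, ?_⟩, ?_⟩
  · obtain ⟨μ, hμ, hrange, hμ₀⟩ :=
      Set.exists_injective_fin_range_eq_apply_eq hcard hmem ⟨0, by omega⟩
    have hspec : ∀ i, μ i ∈ spectrum ℝ H := fun i => hrange ▸ ⟨i, rfl⟩
    obtain ⟨y, hy₀, hy, hp⟩ := (isHermitian_iff_isSymm.2 hH).exists_aeval_prod_eq_smul_vecMulVec
      hrange.symm.subset (hμ₀ ▸ hsimple)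
    refine ⟨μ, hμ, fun i _ => (mem_spectrum_iff_det_sub_smul_one_eq_zero H _).1 (hspec i), _,
      eval_prod_X_sub_C_pos fun i hi => ?_, y, hy₀, hp, hy⟩
    exact hμ₀ ▸ (hmax _ (hspec i)).lt_of_ne (hμ₀ ▸ hμ.ne (ne_of_mem_erase hi))
  · rintro ⟨μ, hμ, hdet, _, _, y, hy₀, hp, hy⟩
    rw [spectrum_eq_range_of_aeval_prod_eq_smul_vecMulVec
      (fun i hi => (mem_spectrum_iff_det_sub_smul_one_eq_zero H _).2 (hdet i hi)) hy₀ hy hp,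
      Set.ncard_range_of_injective hμ, Nat.card_fin]
  · rintro μ - hdet ⟨_, _, y, hy₀, hp, hy⟩
    exact spectrum_eq_range_of_aeval_prod_eq_smul_vecMulVec
      (fun i hi => (mem_spectrum_iff_det_sub_smul_one_eq_zero H _).2 (hdet i hi)) hy₀ hy hp
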